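/- arXiv:1502.05514 — 4 statements merged into one kernel-verified Lean document; each statement's English description precedes it below -/
import Mathlib

section
/- Let α ∈ (0,1), σ > 0, and -1 < β ≤ 0. Define p(s,x) = exp(-σ s^{-α/(2-α)} |x|^{2/(2-α)}) for s > 0, x ∈ R. Then there exists a constant C = C(σ, α, β) such that for all s > 0, sup_{ξ ∈ R} ∫_R |x|^β p(s, x - ξ) dx ≤ C s^{αβ/2 + α/2}. -/
/-!
Split the weight at the radius `r = s ^ (α / 2)`: since `β ≤ 0`,
`|x| ^ β ≤ 1_{|x| ≤ r} |x| ^ β + r ^ β`. The first piece, with the exponential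
bounded by `1`, integrates to `2 r ^ (β + 1) / (β + 1)`; the second is `r ^ β` times a
stretched-exponential integral equal to `2 b ^ (-1 / q) Γ(1 / q + 1)`, where
`b = σ s ^ (-α / (2 - α))` and `q = 2 / (2 - α)`. Both terms scale exactly like
`s ^ (α β / 2 + α / 2)`.
-/

open MeasureTheory Real Set

lemma integrable_comp_abs {E : Type*} [NormedAddCommGroup E] {f : ℝ → E}
    (hf : IntegrableOn f (Ioi 0)) : Integrable fun x => f |x| := by
  have h_Ioi : IntegrableOn (fun x => f |x|) (Ioi 0) :=
    hf.congr_fun (fun x hx => by rw [abs_of_pos hx]) measurableSet_Ioi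
  have h_Iic : IntegrableOn (fun x => f |x|) (Iic 0) := by
    have h_neg : MeasurableEmbedding fun x : ℝ => -x := (Homeomorph.neg ℝ).measurableEmbedding
    rw [← Measure.map_neg_eq_self (volume : Measure ℝ), h_neg.integrableOn_map_iff]
    simp_rw [Function.comp_def, abs_neg, neg_preimage, neg_Iic, neg_zero]
    exact (integrableOn_Ici_iff_integrableOn_Ioi).mpr h_Ioi
  simpa only [Iic_union_Ioi, integrableOn_univ] using h_Iic.union h_Ioi

section TruncatedPower

variable {β r : ℝ}

lemma integrable_indicator_Icc_rpow_abs (hβ : -1 < β) :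
    Integrable fun x : ℝ => (Icc 0 r).indicator (· ^ β) |x| := by
  refine integrable_comp_abs (Integrable.integrableOn ?_)
  rw [integrable_indicator_iff measurableSet_Icc]
  exact ((intervalIntegrable_iff').mp (intervalIntegral.intervalIntegrable_rpow' hβ)).mono_set
    Icc_subset_uIcc

lemma integral_indicator_Icc_rpow_abs (hβ : -1 < β) (hr : 0 ≤ r) :
    ∫ x : ℝ, (Icc 0 r).indicator (· ^ β) |x| = 2 * (r ^ (β + 1) / (β + 1)) := by
  have h_set : Icc 0 r ∩ Ioi 0 = Ioc 0 r := by
    ext x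
    simp only [mem_inter_iff, mem_Icc, mem_Ioi, mem_Ioc]
    grind
  rw [integral_comp_abs (f := (Icc 0 r).indicator (· ^ β)), integral_indicator measurableSet_Icc,
    Measure.restrict_restrict measurableSet_Icc, h_set, ← intervalIntegral.integral_of_le hr,
    integral_rpow (Or.inl hβ), zero_rpow (by linarith), sub_zero]

end TruncatedPower

section StretchedExponential

variable {b q : ℝ}

lemma integrable_exp_neg_mul_abs_sub_rpow (hq : 0 < q) (hb : 0 < b) (ξ : ℝ) :
    Integrable fun x : ℝ => exp (-b * |x - ξ| ^ q) := by
  refine Integrable.comp_sub_right (f := fun x : ℝ => exp (-b * |x| ^ q)) ?_ ξ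
  refine integrable_comp_abs (f := fun t => exp (-b * t ^ q)) ?_
  simpa only [rpow_zero, one_mul] using
    integrableOn_rpow_mul_exp_neg_mul_rpow (s := 0) neg_one_lt_zero hq hb

lemma integral_exp_neg_mul_abs_sub_rpow (hq : 0 < q) (hb : 0 < b) (ξ : ℝ) :
    ∫ x : ℝ, exp (-b * |x - ξ| ^ q) = 2 * (b ^ (-1 / q) * Gamma (1 / q + 1)) := by
  rw [integral_sub_right_eq_self (fun x : ℝ => exp (-b * |x| ^ q)) ξ,
    integral_comp_abs (f := fun t => exp (-b * t ^ q)), integral_exp_neg_mul_rpow hq hb]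

end StretchedExponential

lemma rpow_mul_le_indicator_Icc_rpow_add {y r β e : ℝ} (hy : 0 ≤ y) (hr : 0 < r)
    (hβ : β ≤ 0) (he₀ : 0 ≤ e) (he₁ : e ≤ 1) :
    y ^ β * e ≤ (Icc 0 r).indicator (· ^ β) y + r ^ β * e := by
  rcases le_or_gt y r with hyr | hry
  · rw [indicator_of_mem (mem_Icc.mpr ⟨hy, hyr⟩)]
    have : y ^ β * e ≤ y ^ β := mul_le_of_le_one_right (rpow_nonneg hy β) he₁
    have : 0 ≤ r ^ β * e := by positivity
    linarith
  · rw [indicator_of_notMem (fun h => hry.not_ge h.2), zero_add]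
    exact mul_le_mul_of_nonneg_right (rpow_le_rpow_of_nonpos hr hry.le hβ) he₀

theorem integral_abs_rpow_mul_exp_neg_mul_abs_sub_rpow_le {β q b r : ℝ} (hβ₁ : -1 < β)
    (hβ₀ : β ≤ 0) (hq : 0 < q) (hb : 0 < b) (hr : 0 < r) (ξ : ℝ) :
    ∫ x : ℝ, |x| ^ β * exp (-b * |x - ξ| ^ q) ≤
      2 * (r ^ (β + 1) / (β + 1)) + r ^ β * (2 * (b ^ (-1 / q) * Gamma (1 / q + 1))) := by
  have h_exp_le_one (x : ℝ) : exp (-b * |x - ξ| ^ q) ≤ 1 :=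
    exp_le_one_iff.mpr (by have := rpow_nonneg (abs_nonneg (x - ξ)) q; nlinarith)
  have h_int₁ := integrable_indicator_Icc_rpow_abs (r := r) hβ₁
  have h_int₂ := (integrable_exp_neg_mul_abs_sub_rpow hq hb ξ).const_mul (r ^ β)
  calc ∫ x : ℝ, |x| ^ β * exp (-b * |x - ξ| ^ q)
      ≤ ∫ x : ℝ, ((Icc 0 r).indicator (· ^ β) |x| + r ^ β * exp (-b * |x - ξ| ^ q)) :=
        integral_mono_of_nonneg (.of_forall fun x => by positivity) (h_int₁.add h_int₂)
          (.of_forall fun x => rpow_mul_le_indicator_Icc_rpow_add (abs_nonneg x) hr hβ₀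
            (exp_pos _).le (h_exp_le_one x))
    _ = _ := by
        rw [integral_add h_int₁ h_int₂, integral_const_mul,
          integral_indicator_Icc_rpow_abs hβ₁ hr.le, integral_exp_neg_mul_abs_sub_rpow hq hb ξ]

theorem integral_abs_rpow_mul_p_le_general (α σ β : ℝ) (hα1 : α < 1)
    (hσ : 0 < σ) (hβ1 : -1 < β) (hβ0 : β ≤ 0) :
    ∃ C : ℝ, 0 < C ∧ ∀ s : ℝ, 0 < s → ∀ ξ : ℝ,
      (∫ x : ℝ, |x| ^ β *
          Real.exp (-σ * s ^ (-(α / (2 - α))) * |x - ξ| ^ (2 / (2 - α))))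
        ≤ C * s ^ (α * β / 2 + α / 2) := by
  have h2α : 0 < 2 - α := by linarith
  set q := 2 / (2 - α)
  have hq : 0 < q := by positivity
  have hβ : 0 < β + 1 := by linarith
  refine ⟨2 / (β + 1) + 2 * σ ^ (-1 / q) * Gamma (1 / q + 1),
    by have := Gamma_pos_of_pos (by positivity : 0 < 1 / q + 1); positivity, fun s hs ξ => ?_⟩
  set b := σ * s ^ (-(α / (2 - α)))
  have hb : 0 < b := by positivity
  have hb_rpow : b ^ (-1 / q) = σ ^ (-1 / q) * s ^ (α / 2) := by
    rw [mul_rpow hσ.le (rpow_nonneg hs.le _), ← rpow_mul hs.le]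
    congr 2
    simp only [q]
    field_simp
  calc ∫ x : ℝ, |x| ^ β * exp (-σ * s ^ (-(α / (2 - α))) * |x - ξ| ^ q)
      = ∫ x : ℝ, |x| ^ β * exp (-b * |x - ξ| ^ q) := by simp only [b, neg_mul]
    _ ≤ 2 * ((s ^ (α / 2)) ^ (β + 1) / (β + 1)) +
          (s ^ (α / 2)) ^ β * (2 * (b ^ (-1 / q) * Gamma (1 / q + 1))) :=
        integral_abs_rpow_mul_exp_neg_mul_abs_sub_rpow_le hβ1 hβ0 hq hb (by positivity) ξ
    _ = _ := by
        have h_add : s ^ (α / 2 * β) * s ^ (α / 2) = s ^ (α * β / 2 + α / 2) := by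
          rw [← rpow_add hs]
          ring_nf
        rw [hb_rpow, ← rpow_mul hs.le, ← rpow_mul hs.le,
          show α / 2 * (β + 1) = α * β / 2 + α / 2 by ring, ← h_add]
        ring

theorem integral_abs_rpow_mul_p_le (α σ β : ℝ) (hα : 0 < α) (hα1 : α < 1)
    (hσ : 0 < σ) (hβ1 : -1 < β) (hβ0 : β ≤ 0) :
    ∃ C : ℝ, 0 < C ∧ ∀ s : ℝ, 0 < s → ∀ ξ : ℝ,
      (∫ x : ℝ, |x| ^ β *
          Real.exp (-σ * s ^ (-(α / (2 - α))) * |x - ξ| ^ (2 / (2 - α))))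
        ≤ C * s ^ (α * β / 2 + α / 2) :=
  integral_abs_rpow_mul_p_le_general α σ β hα1 hσ hβ1 hβ0
end

section
/- Let -1 < θ1 < 0, -1 < θ2 ≤ 0 with θ1 + θ2 < -1, and let 0 ≤ s1 < s2 ≤ T. With p(s,x) = exp(-σ s^{-α/(2-α)} |x|^{2/(2-α)}) for α ∈ (0,1), σ > 0, there is a constant C (depending on θ1, θ2, σ, α, T) such that for all real τ1 ≠ ρ2, ∫_R |ρ1 - τ1|^{θ1} |ρ2 - ρ1|^{θ2} p(s2 - s1, ρ2 - ρ1) dρ1 ≤ C |ρ2 - τ1|^{1 + θ1 + θ2}. -/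
/-!
Since `p ≤ 1`, the integral is at most `∫ |ρ₁ - τ₁| ^ θ₁ * |ρ₂ - ρ₁| ^ θ₂ dρ₁`. The substitution
`ρ₁ = τ₁ + (ρ₂ - τ₁) t` turns this into `|ρ₂ - τ₁| ^ (1 + θ₁ + θ₂)` times
`∫ |t| ^ θ₁ * |1 - t| ^ θ₂ dt`, which is finite: the singularities at `0` and `1` are integrable
because `θᵢ > -1`, and at infinity the integrand decays like `|t| ^ (θ₁ + θ₂)` with
`θ₁ + θ₂ < -1`.
-/

open MeasureTheory Real Filter Asymptotics

lemma locallyIntegrable_abs_sub_rpow {r : ℝ} (hr : -1 < r) (c : ℝ) :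
    LocallyIntegrable (fun x : ℝ => |x - c| ^ r) := by
  have h₀ : LocallyIntegrable (fun x : ℝ => |x| ^ r) :=
    locallyIntegrable_of_norm_le_rpow (C := 1) (α := -r) (by simp) (by simp; linarith)
      (.of_forall fun x => by simp [abs_of_nonneg (rpow_nonneg (abs_nonneg x) r)])
      (continuous_abs.measurable.pow_const r).aestronglyMeasurable
  rw [← map_add_right_eq_self volume (-c)] at h₀
  simpa [Function.comp_def, sub_eq_add_neg] using
    (locallyIntegrable_map_homeomorph (Homeomorph.addRight (-c))).1 h₀

noncomputable def betaKernel (a b t : ℝ) : ℝ := |t| ^ a * |1 - t| ^ b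

section BetaKernel

variable {a b : ℝ}

lemma betaKernel_nonneg (t : ℝ) : 0 ≤ betaKernel a b t := by
  unfold betaKernel; positivity

lemma betaKernel_le (ha : a ≤ 0) (hb : b ≤ 0) (t : ℝ) :
    betaKernel a b t ≤ (1 / 2) ^ b * |t| ^ a + (1 / 2) ^ a * |t - 1| ^ b := by
  unfold betaKernel
  rw [abs_sub_comm t]
  -- `|t| + |1 - t| ≥ 1`, so one of the two factors is at least `1 / 2`.
  rcases le_total (1 / 2) |1 - t| with h | h
  · have : |1 - t| ^ b ≤ (1 / 2) ^ b := rpow_le_rpow_of_nonpos (by norm_num) h hb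
    have : 0 ≤ (1 / 2 : ℝ) ^ a * |1 - t| ^ b := by positivity
    nlinarith [rpow_nonneg (abs_nonneg t) a]
  · have h' : 1 / 2 ≤ |t| := by linarith [abs_sub_abs_le_abs_sub 1 t, abs_one (α := ℝ)]
    have : |t| ^ a ≤ (1 / 2) ^ a := rpow_le_rpow_of_nonpos (by norm_num) h' ha
    have : 0 ≤ (1 / 2 : ℝ) ^ b * |t| ^ a := by positivity
    nlinarith [rpow_nonneg (abs_nonneg (1 - t)) b]

lemma betaKernel_le_of_two_le_abs (ha : a ≤ 0) (hb : b ≤ 0) {t : ℝ} (ht : 2 ≤ |t|) :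
    betaKernel a b t ≤ 3 ^ (-(a + b)) * (1 + |t|) ^ (a + b) := by
  have hpos : 0 < (1 + |t|) / 3 := by positivity
  have h₁ : (1 + |t|) / 3 ≤ |t| := by linarith
  have h₂ : (1 + |t|) / 3 ≤ |1 - t| := by
    linarith [abs_sub_abs_le_abs_sub t 1, abs_sub_comm t 1, abs_one (α := ℝ)]
  calc betaKernel a b t ≤ ((1 + |t|) / 3) ^ a * ((1 + |t|) / 3) ^ b :=
        mul_le_mul (rpow_le_rpow_of_nonpos hpos h₁ ha) (rpow_le_rpow_of_nonpos hpos h₂ hb)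
          (by positivity) (by positivity)
    _ = 3 ^ (-(a + b)) * (1 + |t|) ^ (a + b) := by
        rw [← rpow_add hpos, div_rpow (by positivity) (by norm_num), rpow_neg (by norm_num)]
        ring

lemma integrable_betaKernel (ha : -1 < a) (hb : -1 < b) (hab : a + b < -1) :
    Integrable (betaKernel a b) := by
  have ha' : a ≤ 0 := by linarith
  have hb' : b ≤ 0 := by linarith
  have hloc : LocallyIntegrable (betaKernel a b) := by
    have hdom : LocallyIntegrable fun t : ℝ =>
        (1 / 2 : ℝ) ^ b * |t| ^ a + (1 / 2) ^ a * |t - 1| ^ b := by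
      simpa [Pi.add_def, Pi.smul_def] using
        ((locallyIntegrable_abs_sub_rpow ha 0).smul ((1 / 2 : ℝ) ^ b)).add
          ((locallyIntegrable_abs_sub_rpow hb 1).smul ((1 / 2 : ℝ) ^ a))
    refine hdom.mono (by unfold betaKernel; fun_prop) (.of_forall fun t => ?_)
    rw [Real.norm_of_nonneg (betaKernel_nonneg t), Real.norm_of_nonneg (by positivity)]
    exact betaKernel_le ha' hb' t
  have hdecay : betaKernel a b =O[cocompact ℝ] fun t => (1 + ‖t‖) ^ (-(-(a + b))) := by
    refine .of_bound (3 ^ (-(a + b))) ?_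
    filter_upwards [tendsto_norm_cocompact_atTop.eventually_ge_atTop 2] with t ht
    simpa [Real.norm_eq_abs, abs_of_nonneg (betaKernel_nonneg t),
      abs_of_nonneg (by positivity : (0 : ℝ) ≤ (1 + |t|) ^ (a + b))] using
      betaKernel_le_of_two_le_abs ha' hb' ht
  exact hloc.integrable_of_isBigO_cocompact hdecay
    ((integrable_one_add_norm (by simpa using (by linarith : 1 < -(a + b)))).integrableAtFilter _)

lemma abs_sub_rpow_mul_abs_sub_rpow_eq {τ ρ : ℝ} (h : τ ≠ ρ) (x : ℝ) :
    |x - τ| ^ a * |ρ - x| ^ b = |ρ - τ| ^ (a + b) * betaKernel a b ((x - τ) / (ρ - τ)) := by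
  have hd : ρ - τ ≠ 0 := sub_ne_zero.2 h.symm
  have hsub : 1 - (x - τ) / (ρ - τ) = (ρ - x) / (ρ - τ) := by field_simp; ring
  have hpow : ∀ r : ℝ, 0 < |ρ - τ| ^ r := fun r => rpow_pos_of_pos (abs_pos.2 hd) r
  rw [betaKernel, hsub, abs_div, abs_div, div_rpow (abs_nonneg _) (abs_nonneg _),
    div_rpow (abs_nonneg _) (abs_nonneg _), rpow_add (abs_pos.2 hd)]
  field_simp [(hpow a).ne', (hpow b).ne']

lemma integrable_abs_sub_rpow_mul_abs_sub_rpow (ha : -1 < a) (hb : -1 < b) (hab : a + b < -1)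
    {τ ρ : ℝ} (h : τ ≠ ρ) : Integrable fun x => |x - τ| ^ a * |ρ - x| ^ b := by
  simp_rw [abs_sub_rpow_mul_abs_sub_rpow_eq h]
  exact (((integrable_betaKernel ha hb hab).comp_div (sub_ne_zero.2 h.symm)).comp_sub_right
    τ).const_mul _

lemma integral_abs_sub_rpow_mul_abs_sub_rpow {τ ρ : ℝ} (h : τ ≠ ρ) :
    ∫ x, |x - τ| ^ a * |ρ - x| ^ b = |ρ - τ| ^ (1 + a + b) * ∫ t, betaKernel a b t := by
  simp_rw [abs_sub_rpow_mul_abs_sub_rpow_eq h]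
  rw [integral_const_mul, integral_sub_right_eq_self (fun x => betaKernel a b (x / (ρ - τ))) τ,
    Measure.integral_comp_div, smul_eq_mul, add_assoc,
    rpow_add (abs_pos.2 (sub_ne_zero.2 h.symm)) 1, rpow_one]
  ring

end BetaKernel

theorem integral_kernel_subcritical_general (α σ θ₁ θ₂ : ℝ)
    (hσ : 0 < σ)
    (hθ₁ : -1 < θ₁) (hθ₂ : -1 < θ₂)
    (hsum : θ₁ + θ₂ < -1)
    (s₁ s₂ : ℝ) (hs : s₁ < s₂) :
    ∃ C : ℝ, 0 < C ∧ ∀ τ₁ ρ₂ : ℝ, τ₁ ≠ ρ₂ →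
      (∫ ρ₁ : ℝ, |ρ₁ - τ₁| ^ θ₁ * |ρ₂ - ρ₁| ^ θ₂ *
          Real.exp (-σ * (s₂ - s₁) ^ (-(α / (2 - α))) * |ρ₂ - ρ₁| ^ (2 / (2 - α))))
        ≤ C * |ρ₂ - τ₁| ^ (1 + θ₁ + θ₂) := by
  set B := ∫ t, betaKernel θ₁ θ₂ t
  have hB : 0 ≤ B := integral_nonneg betaKernel_nonneg
  refine ⟨B + 1, by linarith, fun τ₁ ρ₂ hne => ?_⟩
  have hkernel_le_one : ∀ ρ₁ : ℝ,
      Real.exp (-σ * (s₂ - s₁) ^ (-(α / (2 - α))) * |ρ₂ - ρ₁| ^ (2 / (2 - α))) ≤ 1 :=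
    fun ρ₁ => exp_le_one_iff.2 <| mul_nonpos_of_nonpos_of_nonneg
      (mul_nonpos_of_nonpos_of_nonneg (neg_nonpos.2 hσ.le) (rpow_nonneg (sub_nonneg.2 hs.le) _))
      (rpow_nonneg (abs_nonneg _) _)
  calc _ ≤ ∫ ρ₁ : ℝ, |ρ₁ - τ₁| ^ θ₁ * |ρ₂ - ρ₁| ^ θ₂ :=
        integral_mono_of_nonneg (.of_forall fun _ => by positivity)
          (integrable_abs_sub_rpow_mul_abs_sub_rpow hθ₁ hθ₂ hsum hne)
          (.of_forall fun ρ₁ => mul_le_of_le_one_right (by positivity) (hkernel_le_one ρ₁))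
    _ = |ρ₂ - τ₁| ^ (1 + θ₁ + θ₂) * B := integral_abs_sub_rpow_mul_abs_sub_rpow hne
    _ ≤ (B + 1) * |ρ₂ - τ₁| ^ (1 + θ₁ + θ₂) := by
        rw [mul_comm]; gcongr; linarith

theorem integral_kernel_subcritical (α σ T θ₁ θ₂ : ℝ) (hα : 0 < α) (hα1 : α < 1)
    (hσ : 0 < σ) (hT : 0 < T)
    (hθ₁ : -1 < θ₁) (hθ₁' : θ₁ < 0) (hθ₂ : -1 < θ₂) (hθ₂' : θ₂ ≤ 0)
    (hsum : θ₁ + θ₂ < -1)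
    (s₁ s₂ : ℝ) (hs₁ : 0 ≤ s₁) (hs : s₁ < s₂) (hs₂ : s₂ ≤ T) :
    ∃ C : ℝ, 0 < C ∧ ∀ τ₁ ρ₂ : ℝ, τ₁ ≠ ρ₂ →
      (∫ ρ₁ : ℝ, |ρ₁ - τ₁| ^ θ₁ * |ρ₂ - ρ₁| ^ θ₂ *
          Real.exp (-σ * (s₂ - s₁) ^ (-(α / (2 - α))) * |ρ₂ - ρ₁| ^ (2 / (2 - α))))
        ≤ C * |ρ₂ - τ₁| ^ (1 + θ₁ + θ₂) :=
  integral_kernel_subcritical_general α σ θ₁ θ₂ hσ hθ₁ hθ₂ hsum s₁ s₂ hs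
end

section
/- Let -1 < θ1 < 0, -1 < θ2 ≤ 0 with θ1 + θ2 = -1, and let 0 ≤ s1 < s2 ≤ T. With p(s,x) = exp(-σ s^{-α/(2-α)} |x|^{2/(2-α)}), there is a constant C such that for all real τ1 ≠ ρ2, ∫_R |ρ1 - τ1|^{θ1} |ρ2 - ρ1|^{θ2} p(s2 - s1, ρ2 - ρ1) dρ1 ≤ C + C |log(ρ2 - τ1)|. -/
/-!
Write `a = |x - τ|`, `b = |ρ - x|` and `e = |ρ - τ| / 2`, so that `a + b ≥ 2e`. Where `a ≤ e`
we have `b ^ θ₂ ≤ e ^ θ₂`, and `∫_{a ≤ e} e ^ θ₂ a ^ θ₁ dx = 2 / (θ₁ + 1)` does not depend on `e`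
because `θ₁ + θ₂ = -1`; symmetrically where `b ≤ e`. Where both exceed `e`, the integrand is at
most `m⁻¹ p(m)` with `m = min a b > e`, which is bounded by `m⁻¹` on `(e, 1]` and by the
integrable profile `p` beyond `1`: this region contributes `|log e| + O(1)`.
-/

open MeasureTheory Real Set

lemma integrable_comp_abs_of_integrableOn_Ioi {f : ℝ → ℝ} (hf : IntegrableOn f (Ioi 0)) :
    Integrable (fun x => f |x|) := by
  have hIoi : IntegrableOn (fun x => f |x|) (Ioi 0) :=
    hf.congr_fun (fun x hx => by rw [abs_of_pos hx]) measurableSet_Ioi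
  have hIic : IntegrableOn (fun x => f |x|) (Iic 0) := by
    have hneg : MeasurableEmbedding fun x : ℝ => -x := (Homeomorph.neg ℝ).measurableEmbedding
    rw [← Measure.map_neg_eq_self (volume : Measure ℝ), hneg.integrableOn_map_iff]
    simp_rw [Function.comp_def, abs_neg, neg_preimage, neg_Iic, neg_zero]
    exact (integrableOn_Ici_iff_integrableOn_Ioi).mpr hIoi
  simpa [Iic_union_Ioi] using hIic.union hIoi

lemma integral_comp_abs_sub (f : ℝ → ℝ) (y : ℝ) :
    ∫ x, f |x - y| = 2 * ∫ t in Ioi 0, f t := by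
  rw [integral_sub_right_eq_self (fun x => f |x|), integral_comp_abs]

lemma integrableOn_Ioi_indicator_Ioc_rpow {θ : ℝ} (hθ : -1 < θ) (e : ℝ) :
    IntegrableOn ((Ioc 0 e).indicator (· ^ θ)) (Ioi 0) :=
  ((intervalIntegral.intervalIntegrable_rpow' hθ).1.integrable_indicator
    measurableSet_Ioc).integrableOn

lemma setIntegral_Ioi_indicator_Ioc_rpow {θ e : ℝ} (hθ : -1 < θ) (he : 0 ≤ e) :
    ∫ t in Ioi 0, (Ioc 0 e).indicator (· ^ θ) t = e ^ (θ + 1) / (θ + 1) := by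
  rw [setIntegral_indicator measurableSet_Ioc,
    inter_eq_self_of_subset_right Ioc_subset_Ioi_self, ← intervalIntegral.integral_of_le he,
    integral_rpow (Or.inl hθ), zero_rpow (by linarith), sub_zero]

lemma integrableOn_Ioi_indicator_Ioc_inv {e : ℝ} (he : 0 < e) :
    IntegrableOn ((Ioc e 1).indicator (·⁻¹)) (Ioi 0) :=
  ((intervalIntegral.intervalIntegrable_inv
    (fun _ hx => ((lt_min he one_pos).trans_le hx.1).ne') continuousOn_id).1.integrable_indicator
    measurableSet_Ioc).integrableOn

lemma setIntegral_Ioi_indicator_Ioc_inv_le {e : ℝ} (he : 0 < e) :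
    ∫ t in Ioi 0, (Ioc e 1).indicator (·⁻¹) t ≤ |log e| := by
  rw [setIntegral_indicator measurableSet_Ioc,
    show Ioi 0 ∩ Ioc e 1 = Ioc e 1 from inter_eq_self_of_subset_right fun t ht => he.trans ht.1]
  rcases le_or_gt e 1 with he1 | he1
  · rw [← intervalIntegral.integral_of_le he1, integral_inv_of_pos he one_pos, one_div, log_inv]
    exact neg_le_abs _
  · simp [Ioc_eq_empty_of_le he1.le]

noncomputable def logTail (φ : ℝ → ℝ) (e t : ℝ) : ℝ := (Ioc e 1).indicator (·⁻¹) t + φ t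

noncomputable def kernelMajorant (θ θ' : ℝ) (φ : ℝ → ℝ) (e t : ℝ) : ℝ :=
  e ^ θ' * (Ioc 0 e).indicator (· ^ θ) t + logTail φ e t

section KernelMajorant

variable {θ θ' θ₁ θ₂ e : ℝ} {φ : ℝ → ℝ}

lemma logTail_nonneg (hφ₀ : ∀ t, 0 ≤ φ t) (he : 0 ≤ e) (t : ℝ) : 0 ≤ logTail φ e t :=
  add_nonneg (indicator_nonneg (fun _ hs => inv_nonneg.2 (he.trans hs.1.le)) t) (hφ₀ t)

lemma inv_mul_le_logTail (hφ₀ : ∀ t, 0 ≤ φ t) (hφ₁ : ∀ t, 0 ≤ t → φ t ≤ 1) (he : 0 < e)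
    {t : ℝ} (ht : e < t) : t⁻¹ * φ t ≤ logTail φ e t := by
  have ht₀ : 0 < t := he.trans ht
  rcases le_or_gt t 1 with ht1 | ht1
  · rw [logTail, indicator_of_mem (show t ∈ Ioc e 1 from ⟨ht, ht1⟩)]
    nlinarith [hφ₀ t, hφ₁ t ht₀.le, inv_pos.2 ht₀]
  · rw [logTail, indicator_of_notMem fun h => ht1.not_ge h.2, zero_add]
    exact mul_le_of_le_one_left (hφ₀ t) (inv_le_one_of_one_le₀ ht1.le)

lemma integrableOn_Ioi_logTail (hφi : IntegrableOn φ (Ioi 0)) (he : 0 < e) :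
    IntegrableOn (logTail φ e) (Ioi 0) :=
  (integrableOn_Ioi_indicator_Ioc_inv he).add hφi

lemma setIntegral_Ioi_logTail_le (hφi : IntegrableOn φ (Ioi 0)) (he : 0 < e) :
    ∫ t in Ioi 0, logTail φ e t ≤ |log e| + ∫ t in Ioi 0, φ t := by
  unfold logTail
  rw [integral_add (integrableOn_Ioi_indicator_Ioc_inv he) hφi]
  gcongr
  exact setIntegral_Ioi_indicator_Ioc_inv_le he

lemma indicator_le_kernelMajorant (hφ₀ : ∀ t, 0 ≤ φ t) (he : 0 ≤ e) (t : ℝ) :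
    e ^ θ' * (Ioc 0 e).indicator (· ^ θ) t ≤ kernelMajorant θ θ' φ e t :=
  le_add_of_nonneg_right (logTail_nonneg hφ₀ he t)

lemma logTail_le_kernelMajorant (he : 0 ≤ e) (t : ℝ) :
    logTail φ e t ≤ kernelMajorant θ θ' φ e t :=
  le_add_of_nonneg_left
    (mul_nonneg (by positivity) (indicator_nonneg (fun _ hs => rpow_nonneg hs.1.le _) t))

lemma kernelMajorant_nonneg (hφ₀ : ∀ t, 0 ≤ φ t) (he : 0 ≤ e) (t : ℝ) :
    0 ≤ kernelMajorant θ θ' φ e t :=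
  (logTail_nonneg hφ₀ he t).trans (logTail_le_kernelMajorant he t)

lemma integrableOn_Ioi_kernelMajorant (hθ : -1 < θ) (hφi : IntegrableOn φ (Ioi 0))
    (he : 0 < e) : IntegrableOn (kernelMajorant θ θ' φ e) (Ioi 0) :=
  ((integrableOn_Ioi_indicator_Ioc_rpow hθ e).const_mul _).add
    (integrableOn_Ioi_logTail hφi he)

lemma setIntegral_Ioi_kernelMajorant_le (hθ : -1 < θ) (hsum : θ + θ' = -1)
    (hφi : IntegrableOn φ (Ioi 0)) (he : 0 < e) :
    ∫ t in Ioi 0, kernelMajorant θ θ' φ e t ≤ 1 / (θ + 1) + (|log e| + ∫ t in Ioi 0, φ t) := by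
  unfold kernelMajorant
  rw [integral_add ((integrableOn_Ioi_indicator_Ioc_rpow hθ e).const_mul _)
    (integrableOn_Ioi_logTail hφi he), integral_const_mul,
    setIntegral_Ioi_indicator_Ioc_rpow hθ he.le, ← mul_div_assoc, ← rpow_add he,
    show θ' + (θ + 1) = 0 by linarith, rpow_zero]
  gcongr
  exact setIntegral_Ioi_logTail_le hφi he

lemma rpow_mul_rpow_mul_le_indicator {u v w : ℝ} (hθ : θ ≠ 0) (hθ' : θ' ≤ 0)
    (hu : 0 ≤ u) (hue : u ≤ e) (hev : e ≤ v) (hw₁ : w ≤ 1) :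
    u ^ θ * v ^ θ' * w ≤ e ^ θ' * (Ioc 0 e).indicator (· ^ θ) u := by
  rcases hu.eq_or_lt with rfl | hu
  · simp [zero_rpow hθ]
  have hv : 0 < v := hu.trans_le (hue.trans hev)
  rw [indicator_of_mem (show u ∈ Ioc 0 e from ⟨hu, hue⟩), mul_comm (e ^ θ')]
  calc u ^ θ * v ^ θ' * w ≤ u ^ θ * v ^ θ' :=
        mul_le_of_le_one_right (mul_nonneg (rpow_nonneg hu.le _) (rpow_nonneg hv.le _)) hw₁
    _ ≤ u ^ θ * e ^ θ' :=
        mul_le_mul_of_nonneg_left (rpow_le_rpow_of_nonpos (hu.trans_le hue) hev hθ')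
          (rpow_nonneg hu.le _)

lemma rpow_mul_rpow_mul_le_inv_min_mul (hθ₁ : θ₁ ≤ 0) (hθ₂ : θ₂ ≤ 0) (hsum : θ₁ + θ₂ = -1)
    (hφ₀ : ∀ t, 0 ≤ φ t) (hφ : AntitoneOn φ (Ici 0)) {a b : ℝ} (ha : 0 < a) (hb : 0 < b) :
    a ^ θ₁ * b ^ θ₂ * φ b ≤ (min a b)⁻¹ * φ (min a b) := by
  have hm : 0 < min a b := lt_min ha hb
  calc a ^ θ₁ * b ^ θ₂ * φ b ≤ min a b ^ θ₁ * min a b ^ θ₂ * φ (min a b) :=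
        mul_le_mul
          (mul_le_mul (rpow_le_rpow_of_nonpos hm (min_le_left a b) hθ₁)
            (rpow_le_rpow_of_nonpos hm (min_le_right a b) hθ₂) (rpow_nonneg hb.le _)
            (rpow_nonneg hm.le _))
          (hφ hm.le hb.le (min_le_right a b)) (hφ₀ b)
          (mul_nonneg (rpow_nonneg hm.le _) (rpow_nonneg hm.le _))
    _ = (min a b)⁻¹ * φ (min a b) := by rw [← rpow_add hm, hsum, rpow_neg_one]

/-- Whichever of `a`, `b` is at most `e` carries the singularity; when both exceed `e`, the
product of the powers is at most `(min a b)⁻¹`. -/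
lemma rpow_mul_rpow_mul_le_kernelMajorant (hθ₁ : θ₁ < 0) (hθ₂ : θ₂ < 0)
    (hsum : θ₁ + θ₂ = -1) (hφ₀ : ∀ t, 0 ≤ φ t) (hφ₁ : ∀ t, 0 ≤ t → φ t ≤ 1)
    (hφ : AntitoneOn φ (Ici 0)) {a b : ℝ} (he : 0 < e) (ha : 0 ≤ a) (hb : 0 ≤ b)
    (hab : 2 * e ≤ a + b) :
    a ^ θ₁ * b ^ θ₂ * φ b ≤ kernelMajorant θ₁ θ₂ φ e a + kernelMajorant θ₂ θ₁ φ e b := by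
  have hMa := kernelMajorant_nonneg (θ := θ₁) (θ' := θ₂) hφ₀ he.le a
  have hMb := kernelMajorant_nonneg (θ := θ₂) (θ' := θ₁) hφ₀ he.le b
  rcases le_or_gt a e with hae | hae
  · have := rpow_mul_rpow_mul_le_indicator hθ₁.ne hθ₂.le ha hae (show e ≤ b by linarith)
      (hφ₁ b hb)
    linarith [indicator_le_kernelMajorant (θ := θ₁) (θ' := θ₂) hφ₀ he.le a]
  rcases le_or_gt b e with hbe | hbe
  · have := rpow_mul_rpow_mul_le_indicator hθ₂.ne hθ₁.le hb hbe hae.le (hφ₁ b hb)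
    linarith [indicator_le_kernelMajorant (θ := θ₂) (θ' := θ₁) hφ₀ he.le b,
      mul_right_comm (a ^ θ₁) (b ^ θ₂) (φ b), mul_comm (a ^ θ₁) (b ^ θ₂)]
  have hmin := rpow_mul_rpow_mul_le_inv_min_mul hθ₁.le hθ₂.le hsum hφ₀ hφ (he.trans hae)
    (he.trans hbe)
  have htail := inv_mul_le_logTail hφ₀ hφ₁ he (lt_min hae hbe)
  rcases min_choice a b with h | h <;> rw [h] at hmin htail
  · linarith [logTail_le_kernelMajorant (θ := θ₁) (θ' := θ₂) (φ := φ) he.le a]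
  · linarith [logTail_le_kernelMajorant (θ := θ₂) (θ' := θ₁) (φ := φ) he.le b]

lemma integral_rpow_abs_sub_mul_le (hθ₁ : -1 < θ₁) (hθ₂ : -1 < θ₂) (hsum : θ₁ + θ₂ = -1)
    (hφ₀ : ∀ t, 0 ≤ φ t) (hφ₁ : ∀ t, 0 ≤ t → φ t ≤ 1) (hφ : AntitoneOn φ (Ici 0))
    (hφi : IntegrableOn φ (Ioi 0)) {τ ρ : ℝ} (hτρ : τ ≠ ρ) :
    ∫ x, |x - τ| ^ θ₁ * |ρ - x| ^ θ₂ * φ |ρ - x|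
      ≤ 2 / (θ₁ + 1) + 2 / (θ₂ + 1) + 4 * (|log (|ρ - τ| / 2)| + ∫ t in Ioi 0, φ t) := by
  set e := |ρ - τ| / 2 with he_def
  have he : 0 < e := by have := abs_pos.2 (sub_ne_zero.2 hτρ.symm); positivity
  have hM₁ := (integrable_comp_abs_of_integrableOn_Ioi
    (integrableOn_Ioi_kernelMajorant (θ' := θ₂) hθ₁ hφi he)).comp_sub_right τ
  have hM₂ := (integrable_comp_abs_of_integrableOn_Ioi
    (integrableOn_Ioi_kernelMajorant (θ' := θ₁) hθ₂ hφi he)).comp_sub_right ρ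
  have hdom (x : ℝ) : |x - τ| ^ θ₁ * |ρ - x| ^ θ₂ * φ |ρ - x|
      ≤ kernelMajorant θ₁ θ₂ φ e |x - τ| + kernelMajorant θ₂ θ₁ φ e |x - ρ| := by
    rw [abs_sub_comm ρ x]
    refine rpow_mul_rpow_mul_le_kernelMajorant (by linarith) (by linarith) hsum hφ₀ hφ₁ hφ he
      (abs_nonneg _) (abs_nonneg _) ?_
    have := abs_sub_le ρ x τ
    rw [abs_sub_comm ρ x] at this
    linarith [he_def]
  calc ∫ x, |x - τ| ^ θ₁ * |ρ - x| ^ θ₂ * φ |ρ - x|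
      ≤ ∫ x, (kernelMajorant θ₁ θ₂ φ e |x - τ| + kernelMajorant θ₂ θ₁ φ e |x - ρ|) :=
        integral_mono_of_nonneg (.of_forall fun x => by positivity [hφ₀ |ρ - x|])
          (hM₁.add hM₂) (.of_forall hdom)
    _ = 2 * (∫ t in Ioi 0, kernelMajorant θ₁ θ₂ φ e t)
          + 2 * ∫ t in Ioi 0, kernelMajorant θ₂ θ₁ φ e t := by
        rw [integral_add hM₁ hM₂, integral_comp_abs_sub, integral_comp_abs_sub]
    _ ≤ _ := by
        have h₁ := setIntegral_Ioi_kernelMajorant_le hθ₁ hsum hφi he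
        have h₂ := setIntegral_Ioi_kernelMajorant_le (θ' := θ₁) hθ₂ (by linarith) hφi he
        rw [div_eq_mul_one_div 2 (θ₁ + 1), div_eq_mul_one_div 2 (θ₂ + 1)]
        linarith

theorem exists_integral_rpow_abs_sub_mul_le (hθ₁ : -1 < θ₁) (hθ₂ : -1 < θ₂)
    (hsum : θ₁ + θ₂ = -1) (hφ₀ : ∀ t, 0 ≤ φ t) (hφ₁ : ∀ t, 0 ≤ t → φ t ≤ 1)
    (hφ : AntitoneOn φ (Ici 0)) (hφi : IntegrableOn φ (Ioi 0)) :
    ∃ C : ℝ, 0 < C ∧ ∀ τ ρ : ℝ, τ ≠ ρ →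
      ∫ x, |x - τ| ^ θ₁ * |ρ - x| ^ θ₂ * φ |ρ - x| ≤ C + C * |log (ρ - τ)| := by
  set K := ∫ t in Ioi 0, φ t
  have hK : 0 ≤ K := setIntegral_nonneg measurableSet_Ioi fun t _ => hφ₀ t
  set C₀ := 2 / (θ₁ + 1) + 2 / (θ₂ + 1) + 4 * (log 2 + K)
  have hC₀ : 0 ≤ C₀ := by
    have : 0 < log 2 := log_pos one_lt_two
    have : 0 < θ₁ + 1 := by linarith
    have : 0 < θ₂ + 1 := by linarith
    positivity
  refine ⟨C₀ + 4, by linarith, fun τ ρ hτρ => ?_⟩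
  have hlog : |log (|ρ - τ| / 2)| ≤ |log (ρ - τ)| + log 2 := by
    rw [log_div (abs_ne_zero.2 (sub_ne_zero.2 hτρ.symm)) two_ne_zero, log_abs]
    exact (abs_sub _ _).trans_eq (by rw [abs_of_pos (log_pos one_lt_two)])
  have hCL : 4 * |log (ρ - τ)| ≤ (C₀ + 4) * |log (ρ - τ)| :=
    mul_le_mul_of_nonneg_right (by linarith) (abs_nonneg _)
  linarith [integral_rpow_abs_sub_mul_le hθ₁ hθ₂ hsum hφ₀ hφ₁ hφ hφi hτρ]

end KernelMajorant

lemma exp_neg_mul_rpow_le_one {c β t : ℝ} (hc : 0 ≤ c) (ht : 0 ≤ t) :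
    exp (-c * t ^ β) ≤ 1 :=
  exp_le_one_iff.2 (by rw [neg_mul]; exact neg_nonpos.2 (mul_nonneg hc (rpow_nonneg ht β)))

lemma antitoneOn_exp_neg_mul_rpow {c β : ℝ} (hc : 0 ≤ c) (hβ : 0 ≤ β) :
    AntitoneOn (fun t => exp (-c * t ^ β)) (Ici 0) := fun _ hx _ _ hxy =>
  exp_le_exp.2 (mul_le_mul_of_nonpos_left (rpow_le_rpow hx hxy hβ) (neg_nonpos.2 hc))

lemma integrableOn_Ioi_exp_neg_mul_rpow {c β : ℝ} (hc : 0 < c) (hβ : 0 < β) :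
    IntegrableOn (fun t => exp (-c * t ^ β)) (Ioi 0) := by
  simpa using integrableOn_rpow_mul_exp_neg_mul_rpow (s := 0) neg_one_lt_zero hβ hc

theorem integral_kernel_critical_general (α σ θ₁ θ₂ : ℝ) (hα1 : α < 1)
    (hσ : 0 < σ)
    (hθ₁ : -1 < θ₁) (hθ₂ : -1 < θ₂)
    (hsum : θ₁ + θ₂ = -1)
    (s₁ s₂ : ℝ) (hs : s₁ < s₂) :
    ∃ C : ℝ, 0 < C ∧ ∀ τ₁ ρ₂ : ℝ, τ₁ ≠ ρ₂ →
      (∫ ρ₁ : ℝ, |ρ₁ - τ₁| ^ θ₁ * |ρ₂ - ρ₁| ^ θ₂ *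
          Real.exp (-σ * (s₂ - s₁) ^ (-(α / (2 - α))) * |ρ₂ - ρ₁| ^ (2 / (2 - α))))
        ≤ C + C * |Real.log (ρ₂ - τ₁)| := by
  have hc : 0 < σ * (s₂ - s₁) ^ (-(α / (2 - α))) := mul_pos hσ (rpow_pos_of_pos (by linarith) _)
  have hβ : 0 < 2 / (2 - α) := div_pos two_pos (by linarith)
  simpa only [neg_mul] using exists_integral_rpow_abs_sub_mul_le hθ₁ hθ₂ hsum
    (fun _ => (exp_pos _).le) (fun _ => exp_neg_mul_rpow_le_one hc.le)
    (antitoneOn_exp_neg_mul_rpow hc.le hβ.le) (integrableOn_Ioi_exp_neg_mul_rpow hc hβ)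

theorem integral_kernel_critical (α σ T θ₁ θ₂ : ℝ) (hα : 0 < α) (hα1 : α < 1)
    (hσ : 0 < σ) (hT : 0 < T)
    (hθ₁ : -1 < θ₁) (hθ₁' : θ₁ < 0) (hθ₂ : -1 < θ₂) (hθ₂' : θ₂ ≤ 0)
    (hsum : θ₁ + θ₂ = -1)
    (s₁ s₂ : ℝ) (hs₁ : 0 ≤ s₁) (hs : s₁ < s₂) (hs₂ : s₂ ≤ T) :
    ∃ C : ℝ, 0 < C ∧ ∀ τ₁ ρ₂ : ℝ, τ₁ ≠ ρ₂ →
      (∫ ρ₁ : ℝ, |ρ₁ - τ₁| ^ θ₁ * |ρ₂ - ρ₁| ^ θ₂ *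
          Real.exp (-σ * (s₂ - s₁) ^ (-(α / (2 - α))) * |ρ₂ - ρ₁| ^ (2 / (2 - α))))
        ≤ C + C * |Real.log (ρ₂ - τ₁)| :=
  integral_kernel_critical_general α σ θ₁ θ₂ hα1 hσ hθ₁ hθ₂ hsum s₁ s₂ hs
end

section
/- Let p_1, ..., p_n > 0 and T > 0. Then the integral over the simplex {0 ≤ s_1 < s_2 < ... < s_n ≤ T} of (s_n - s_{n-1})^{p_n - 1} ··· (s_2 - s_1)^{p_2 - 1} s_1^{p_1 - 1} ds_1 ··· ds_n equals T^{p_1 + ... + p_n} ∏_{k=1}^n Γ(p_k) / Γ(p_1 + ... + p_n + 1). -/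
/-!
Fixing the first vertex `s 0 = x` and translating the others by `-x` identifies the fibre of
the simplex of size `T` with the simplex of size `T - x` for the weights `p ∘ Fin.succ`, and the
weight factors as `x ^ (p 0 - 1)` times the smaller weight. By induction the inner integral is
`c (T - x) ^ q` with `q = p 1 + ⋯ + p n`, and the outer one is the Beta integral
`∫₀ᵀ x ^ (a - 1) (T - x) ^ (b - 1) dx = T ^ (a + b - 1) Γ(a) Γ(b) / Γ(a + b)`.
The computation is done with lower Lebesgue integrals, which need no integrability side
conditions; the weight is nonnegative on the simplex, so the Bochner integral is recovered at
the end.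
-/

open MeasureTheory Set Finset
open scoped ENNReal

theorem lintegral_Ioo_rpow_mul_one_sub_rpow {a b : ℝ} (ha : 0 < a) (hb : 0 < b) :
    ∫⁻ x in Ioo 0 1, ENNReal.ofReal (x ^ (a - 1) * (1 - x) ^ (b - 1)) =
      ENNReal.ofReal (ProbabilityTheory.beta a b) := by
  have hB := ProbabilityTheory.beta_pos ha hb
  have h := ProbabilityTheory.lintegral_betaPDF_eq_one ha hb
  simp_rw [ProbabilityTheory.lintegral_betaPDF, mul_assoc,
    ENNReal.ofReal_mul (one_div_pos.2 hB).le] at h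
  rw [lintegral_const_mul' _ _ ENNReal.ofReal_ne_top, one_div, ENNReal.ofReal_inv_of_pos hB,
    mul_comm] at h
  rw [ENNReal.eq_inv_of_mul_eq_one_left h, inv_inv]

theorem setLIntegral_Ioo_eq_mul_setLIntegral_Ioo_comp_mul_left (f : ℝ → ℝ≥0∞) {T : ℝ}
    (hT : 0 < T) :
    ∫⁻ x in Ioo 0 T, f x = ENNReal.ofReal T * ∫⁻ u in Ioo 0 1, f (T * u) := by
  have he : MeasurableEmbedding (T * ·) := (Homeomorph.mulLeft₀ T hT.ne').measurableEmbedding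
  have h := he.lintegral_map (μ := volume.restrict ((T * ·) ⁻¹' Ioo 0 T)) f
  rw [← he.restrict_map, Real.map_volume_mul_left hT.ne', Measure.restrict_smul,
    lintegral_smul_measure, preimage_const_mul_Ioo₀ _ _ hT, zero_div, div_self hT.ne'] at h
  rw [← h, smul_eq_mul, ← mul_assoc, abs_of_pos (inv_pos.2 hT), ← ENNReal.ofReal_mul hT.le,
    mul_inv_cancel₀ hT.ne', ENNReal.ofReal_one, one_mul]

theorem lintegral_Ioo_rpow_mul_sub_rpow {a b T : ℝ} (ha : 0 < a) (hb : 0 < b) (hT : 0 < T) :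
    ∫⁻ x in Ioo 0 T, ENNReal.ofReal (x ^ (a - 1) * (T - x) ^ (b - 1)) =
      ENNReal.ofReal (T ^ (a + b - 1) * ProbabilityTheory.beta a b) := by
  have hscale : ∀ u ∈ Ioo (0 : ℝ) 1, (T * u) ^ (a - 1) * (T - T * u) ^ (b - 1) =
      T ^ (a + b - 2) * (u ^ (a - 1) * (1 - u) ^ (b - 1)) := by
    rintro u ⟨hu₀, hu₁⟩
    rw [← mul_one_sub, Real.mul_rpow hT.le hu₀.le, Real.mul_rpow hT.le (by linarith)]
    rw [show a + b - 2 = (a - 1) + (b - 1) by ring, Real.rpow_add hT]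
    ring
  rw [setLIntegral_Ioo_eq_mul_setLIntegral_Ioo_comp_mul_left _ hT,
    setLIntegral_congr_fun measurableSet_Ioo fun u hu => by rw [hscale u hu],
    setLIntegral_congr_fun measurableSet_Ioo fun u hu => ENNReal.ofReal_mul (by positivity),
    lintegral_const_mul' _ _ ENNReal.ofReal_ne_top, lintegral_Ioo_rpow_mul_one_sub_rpow ha hb,
    ← ENNReal.ofReal_mul (by positivity), ← ENNReal.ofReal_mul hT.le, ← mul_assoc,
    show a + b - 1 = a + b - 2 + 1 by ring, Real.rpow_add_one hT.ne', mul_comm T]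

theorem lintegral_fin_cons {n : ℕ} {f : (Fin (n + 1) → ℝ) → ℝ≥0∞}
    (hf : Measurable f) :
    ∫⁻ s, f s = ∫⁻ x, ∫⁻ y, f (Fin.cons x y) := by
  rw [← (volume_preserving_piFinSuccAbove (fun _ => ℝ) 0).symm.lintegral_comp hf,
    Measure.volume_eq_prod, lintegral_prod _ (by fun_prop)]
  simp [MeasurableEquiv.piFinSuccAbove_symm_apply, Fin.consEquiv]

theorem Fin.strictMono_cons_iff {α : Type*} [Preorder α] {n : ℕ} {x : α}
    {y : Fin (n + 1) → α} :
    StrictMono (Fin.cons x y : Fin (n + 2) → α) ↔ x < y 0 ∧ StrictMono y := by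
  simp only [Fin.strictMono_iff_lt_succ (n := n + 1), Fin.strictMono_iff_lt_succ (n := n),
    Fin.forall_fin_succ, ← Fin.succ_castSucc, Fin.castSucc_zero, Fin.cons_zero, Fin.cons_succ]

theorem strictMono_sub_const_iff {ι : Type*} [Preorder ι] {y : ι → ℝ} (x : ℝ) :
    StrictMono (y - fun _ => x) ↔ StrictMono y := by
  simp [StrictMono]

/-- Open at `0`, unlike the set in `simplex_integral_eq` (they differ by a null set), so that the
fibres over `s 0 = x` are again ordered simplices, see `cons_mem_orderedSimplex_iff`. -/
def orderedSimplex (n : ℕ) (T : ℝ) : Set (Fin (n + 1) → ℝ) :=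
  {s | 0 < s 0 ∧ StrictMono s ∧ s (Fin.last n) ≤ T}

noncomputable def simplexWeight {n : ℕ} (p s : Fin (n + 1) → ℝ) : ℝ :=
  s 0 ^ (p 0 - 1) * ∏ i : Fin n, (s i.succ - s i.castSucc) ^ (p i.succ - 1)

theorem measurableSet_orderedSimplex (n : ℕ) (T : ℝ) : MeasurableSet (orderedSimplex n T) := by
  simp only [orderedSimplex, Fin.strictMono_iff_lt_succ, ofPred_and, ofPred_forall]
  exact (measurableSet_lt measurable_const (measurable_pi_apply 0)).inter
    ((MeasurableSet.iInter fun i => measurableSet_lt (measurable_pi_apply i.castSucc)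
      (measurable_pi_apply i.succ)).inter
      (measurableSet_le (measurable_pi_apply _) measurable_const))

theorem measurable_simplexWeight {n : ℕ} (p : Fin (n + 1) → ℝ) :
    Measurable (simplexWeight p) := by
  unfold simplexWeight; fun_prop

theorem simplexWeight_nonneg {n : ℕ} (p : Fin (n + 1) → ℝ) {T : ℝ} {s : Fin (n + 1) → ℝ}
    (hs : s ∈ orderedSimplex n T) : 0 ≤ simplexWeight p s :=
  mul_nonneg (Real.rpow_nonneg hs.1.le _) <| Finset.prod_nonneg fun i _ =>
    Real.rpow_nonneg (sub_nonneg.2 (hs.2.1 (Fin.castSucc_lt_succ (i := i))).le) _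

theorem ae_eq_orderedSimplex (n : ℕ) (T : ℝ) :
    {s : Fin (n + 1) → ℝ | 0 ≤ s 0 ∧ StrictMono s ∧ s (Fin.last n) ≤ T} =ᵐ[volume]
      orderedSimplex n T := by
  have h : ∀ᵐ s : Fin (n + 1) → ℝ, s 0 ≠ 0 := by
    rw [ae_iff]
    simpa [volume_pi] using
      Measure.pi_hyperplane (fun _ : Fin (n + 1) => (volume : Measure ℝ)) 0 0
  filter_upwards [h] with s hs
  change (0 ≤ s 0 ∧ _) = (0 < s 0 ∧ _)
  rw [hs.symm.le_iff_lt]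

theorem cons_mem_orderedSimplex_iff {n : ℕ} {T x : ℝ} {y : Fin (n + 1) → ℝ} :
    Fin.cons x y ∈ orderedSimplex (n + 1) T ↔
      x ∈ Ioo 0 T ∧ y - (fun _ => x) ∈ orderedSimplex n (T - x) := by
  simp only [orderedSimplex, mem_ofPred_eq, Set.mem_Ioo, Fin.strictMono_cons_iff,
    strictMono_sub_const_iff, Fin.cons_zero, ← Fin.succ_last, Fin.cons_succ, Pi.sub_apply,
    sub_pos, sub_le_sub_iff_right]
  constructor
  · rintro ⟨hx, ⟨hxy, hy⟩, hyT⟩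
    exact ⟨⟨hx, hxy.trans_le ((hy.monotone (Fin.zero_le _)).trans hyT)⟩, hxy, hy, hyT⟩
  · rintro ⟨⟨hx, -⟩, hxy, hy, hyT⟩
    exact ⟨hx, ⟨hxy, hy⟩, hyT⟩

theorem simplexWeight_cons {n : ℕ} (p : Fin (n + 2) → ℝ) (x : ℝ) (y : Fin (n + 1) → ℝ) :
    simplexWeight p (Fin.cons x y) =
      x ^ (p 0 - 1) * simplexWeight (Fin.tail p) (y - fun _ => x) := by
  simp [simplexWeight, Fin.prod_univ_succ, Fin.tail]

theorem lintegral_orderedSimplex_succ {n : ℕ} (p : Fin (n + 2) → ℝ) (T : ℝ) :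
    ∫⁻ s in orderedSimplex (n + 1) T, ENNReal.ofReal (simplexWeight p s) =
      ∫⁻ x in Ioo 0 T, ENNReal.ofReal (x ^ (p 0 - 1)) *
        ∫⁻ z in orderedSimplex n (T - x), ENNReal.ofReal (simplexWeight (Fin.tail p) z) := by
  rw [← lintegral_indicator (measurableSet_orderedSimplex _ _),
    lintegral_fin_cons ((measurable_simplexWeight p).ennreal_ofReal.indicator
      (measurableSet_orderedSimplex _ _)),
    ← lintegral_indicator measurableSet_Ioo]
  refine lintegral_congr fun x => ?_
  by_cases hx : x ∈ Ioo 0 T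
  · have hfiber : ∀ y, (orderedSimplex (n + 1) T).indicator
        (fun s => ENNReal.ofReal (simplexWeight p s)) (Fin.cons x y) =
        ENNReal.ofReal (x ^ (p 0 - 1)) * (orderedSimplex n (T - x)).indicator
          (fun z => ENNReal.ofReal (simplexWeight (Fin.tail p) z)) (y - fun _ => x) := by
      intro y
      by_cases hy : (y - fun _ => x) ∈ orderedSimplex n (T - x)
      · rw [indicator_of_mem (cons_mem_orderedSimplex_iff.2 ⟨hx, hy⟩), indicator_of_mem hy,
          simplexWeight_cons, ENNReal.ofReal_mul (Real.rpow_nonneg hx.1.le _)]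
      · rw [indicator_of_notMem (fun h => hy (cons_mem_orderedSimplex_iff.1 h).2),
          indicator_of_notMem hy, mul_zero]
    rw [indicator_of_mem hx, lintegral_congr hfiber, lintegral_const_mul' _ _ ENNReal.ofReal_ne_top,
      lintegral_sub_right_eq_self (fun z => (orderedSimplex n (T - x)).indicator
          (fun z => ENNReal.ofReal (simplexWeight (Fin.tail p) z)) z),
      lintegral_indicator (measurableSet_orderedSimplex _ _)]
  · have hfiber : ∀ y, (orderedSimplex (n + 1) T).indicator
        (fun s => ENNReal.ofReal (simplexWeight p s)) (Fin.cons x y) = 0 := fun y =>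
      indicator_of_notMem (fun h => hx (cons_mem_orderedSimplex_iff.1 h).1) _
    simp only [hfiber, lintegral_zero, indicator_of_notMem hx]

theorem lintegral_orderedSimplex_zero {p : Fin 1 → ℝ} (hp : 0 < p 0) {T : ℝ} (hT : 0 < T) :
    ∫⁻ s in orderedSimplex 0 T, ENNReal.ofReal (simplexWeight p s) =
      ENNReal.ofReal (T ^ p 0 * ProbabilityTheory.beta (p 0) 1) := by
  have hset : orderedSimplex 0 T = MeasurableEquiv.funUnique (Fin 1) ℝ ⁻¹' Ioc 0 T := by
    ext s
    simp [orderedSimplex, Subsingleton.strictMono]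
  have hweight :
      simplexWeight p = fun s => MeasurableEquiv.funUnique (Fin 1) ℝ s ^ (p 0 - 1) := by
    ext s; simp [simplexWeight]
  have hbeta := lintegral_Ioo_rpow_mul_sub_rpow hp one_pos hT
  simp only [sub_self, Real.rpow_zero, mul_one, add_sub_cancel_right] at hbeta
  rw [hset, hweight, ← hbeta, setLIntegral_congr Ioo_ae_eq_Ioc]
  exact (volume_preserving_funUnique (Fin 1) ℝ).setLIntegral_comp_preimage measurableSet_Ioc
    (f := fun x => ENNReal.ofReal (x ^ (p 0 - 1))) (by fun_prop)

theorem lintegral_orderedSimplex {n : ℕ} {p : Fin (n + 1) → ℝ} (hp : ∀ i, 0 < p i) {T : ℝ}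
    (hT : 0 < T) :
    ∫⁻ s in orderedSimplex n T, ENNReal.ofReal (simplexWeight p s) =
      ENNReal.ofReal
        (T ^ (∑ i, p i) * (∏ i, Real.Gamma (p i)) / Real.Gamma ((∑ i, p i) + 1)) := by
  induction n generalizing T with
  | zero =>
    rw [lintegral_orderedSimplex_zero (hp 0) hT, mul_div_assoc]
    simp [ProbabilityTheory.beta]
  | succ n ih =>
    set Q := ∑ i, Fin.tail p i
    set C := (∏ i, Real.Gamma (Fin.tail p i)) / Real.Gamma (Q + 1) with hC
    have hQ : 0 < Q := Finset.sum_pos (fun i _ => hp i.succ) univ_nonempty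
    have hC₀ : 0 ≤ C := div_nonneg (Finset.prod_nonneg fun i _ => (Real.Gamma_pos_of_pos
      (hp i.succ)).le) (Real.Gamma_pos_of_pos (by positivity)).le
    have hfiber : ∀ x ∈ Ioo 0 T, ENNReal.ofReal (x ^ (p 0 - 1)) *
        ∫⁻ z in orderedSimplex n (T - x), ENNReal.ofReal (simplexWeight (Fin.tail p) z) =
          ENNReal.ofReal (x ^ (p 0 - 1) * (T - x) ^ (Q + 1 - 1)) * ENNReal.ofReal C := by
      rintro x ⟨hx, hxT⟩
      rw [ih (p := Fin.tail p) (fun i => hp i.succ) (sub_pos.2 hxT), add_sub_cancel_right,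
        mul_div_assoc, ENNReal.ofReal_mul (by positivity), ← mul_assoc,
        ← ENNReal.ofReal_mul (by positivity)]
    have hsum : ∑ i, p i = p 0 + Q := Fin.sum_univ_succ p
    have hprod : ∏ i, Real.Gamma (p i) = Real.Gamma (p 0) * ∏ i, Real.Gamma (Fin.tail p i) :=
      Fin.prod_univ_succ _
    have hΓ : Real.Gamma (Q + 1) ≠ 0 := (Real.Gamma_pos_of_pos (by positivity)).ne'
    rw [lintegral_orderedSimplex_succ, setLIntegral_congr_fun measurableSet_Ioo hfiber,
      lintegral_mul_const' _ _ ENNReal.ofReal_ne_top,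
      lintegral_Ioo_rpow_mul_sub_rpow (hp 0) (by positivity) hT, ← ENNReal.ofReal_mul' hC₀,
      hsum, hprod, hC, ProbabilityTheory.beta, show p 0 + (Q + 1) - 1 = p 0 + Q by ring,
      show p 0 + (Q + 1) = p 0 + Q + 1 by ring]
    field_simp

theorem simplex_integral_eq (n : ℕ) (p : Fin (n + 1) → ℝ) (hp : ∀ i, 0 < p i)
    (T : ℝ) (hT : 0 < T) :
    (∫ s in {s : Fin (n + 1) → ℝ | 0 ≤ s 0 ∧ StrictMono s ∧ s (Fin.last n) ≤ T},
        (s 0) ^ (p 0 - 1) *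
          ∏ i : Fin n, (s i.succ - s i.castSucc) ^ (p i.succ - 1))
      = T ^ (∑ i, p i) * (∏ i, Real.Gamma (p i)) /
          Real.Gamma ((∑ i, p i) + 1) := by
  change ∫ s in _, simplexWeight p s = _
  have hΓ : 0 < Real.Gamma ((∑ i, p i) + 1) :=
    Real.Gamma_pos_of_pos (by positivity [Finset.sum_pos (fun i _ => hp i) univ_nonempty])
  rw [setIntegral_congr_set (ae_eq_orderedSimplex n T),
    integral_eq_lintegral_of_nonneg_ae
      (ae_restrict_of_forall_mem (measurableSet_orderedSimplex n T) fun s hs =>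
        simplexWeight_nonneg p hs)
      (measurable_simplexWeight p).aestronglyMeasurable,
    lintegral_orderedSimplex hp hT, ENNReal.toReal_ofReal]
  exact div_nonneg (mul_nonneg (Real.rpow_nonneg hT.le _)
    (prod_nonneg fun i _ => (Real.Gamma_pos_of_pos (hp i)).le)) hΓ.le
end
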